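/- (Theorem 1) Let A be an invertible n×n real matrix with n ≥ 2 and rows a₁,…,aₙ, let b ∈ ℝⁿ, and let x be the solution of Ax = b. Fix an initial point x₁ ∈ ℝⁿ and let the random sequence be defined by x_{k+1} = x_k + 2·((b_{i_k} − ⟨x_k, a_{i_k}⟩)/‖a_{i_k}‖²)·a_{i_k}, where i₁, i₂, … are independent indices with P(i = j) = ‖a_j‖²/‖A‖_F². Then for every m ≥ 1, E‖ x − (1/m)·Σ_{k=1}^{m} x_k ‖ ≤ ((1 + ‖A‖_F·‖A⁻¹‖)/√m)·‖x − x₁‖, where the expectation is the sum over all index sequences (i₁,…,i_{m−1}) ∈ {1,…,n}^{m−1} weighted by the product of the probabilities ‖a_{i_j}‖²/‖A‖_F². -/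

import Mathlib

open scoped RealInnerProductSpace
open Finset

/-- The `i`-th row of the matrix `A`, viewed as a vector in Euclidean space. -/
noncomputable def row {n : ℕ} (A : Matrix (Fin n) (Fin n) ℝ) (i : Fin n) :
    EuclideanSpace ℝ (Fin n) := (WithLp.equiv 2 (Fin n → ℝ)).symm (A i)

/-- View a plain vector as an element of Euclidean space. -/
noncomputable def toE {n : ℕ} (v : Fin n → ℝ) : EuclideanSpace ℝ (Fin n) :=
  (WithLp.equiv 2 (Fin n → ℝ)).symm v

/-- View an element of Euclidean space as a plain vector. -/
noncomputable def ofE {n : ℕ} (v : EuclideanSpace ℝ (Fin n)) : Fin n → ℝ :=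
  WithLp.equiv 2 (Fin n → ℝ) v

/-- The squared Frobenius norm `‖A‖_F²` of a matrix. -/
def frobSq {n : ℕ} (A : Matrix (Fin n) (Fin n) ℝ) : ℝ := ∑ i, ∑ j, (A i j) ^ 2

/-- The ℓ² operator norm of a matrix. -/
noncomputable def opNorm {n : ℕ} (A : Matrix (Fin n) (Fin n) ℝ) : ℝ :=
  ‖Matrix.toEuclideanCLM (𝕜 := ℝ) A‖

/-- The reflection `R_i x = x − 2·(⟨x, a_i⟩/‖a_i‖²)·a_i` through the hyperplane
`{y : ⟨a_i, y⟩ = 0}`, where `a_i` is the `i`-th row of `A`. -/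
noncomputable def reflRow {n : ℕ} (A : Matrix (Fin n) (Fin n) ℝ) (i : Fin n)
    (x : EuclideanSpace ℝ (Fin n)) : EuclideanSpace ℝ (Fin n) :=
  x - (2 * (⟪x, row A i⟫ / ‖row A i‖ ^ 2)) • row A i

/-- `applySeq A k is x = (R_{i_k} ∘ ⋯ ∘ R_{i_1}) x` for the index sequence `is`. -/
noncomputable def applySeq {n : ℕ} (A : Matrix (Fin n) (Fin n) ℝ) :
    (k : ℕ) → (Fin k → Fin n) → EuclideanSpace ℝ (Fin n) → EuclideanSpace ℝ (Fin n)
  | 0, _, x => x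
  | k + 1, is, x => reflRow A (is (Fin.last k)) (applySeq A k (fun j => is j.castSucc) x)

/-- The affine reflection of `y` through the hyperplane `{z : ⟨a_i, z⟩ = b_i}`. -/
noncomputable def reflAff {n : ℕ} (A : Matrix (Fin n) (Fin n) ℝ) (b : Fin n → ℝ) (i : Fin n)
    (y : EuclideanSpace ℝ (Fin n)) : EuclideanSpace ℝ (Fin n) :=
  y + (2 * ((b i - ⟪y, row A i⟫) / ‖row A i‖ ^ 2)) • row A i

/-- Iterated affine reflections along an index sequence. -/
noncomputable def applyAff {n : ℕ} (A : Matrix (Fin n) (Fin n) ℝ) (b : Fin n → ℝ) :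
    (k : ℕ) → (Fin k → Fin n) → EuclideanSpace ℝ (Fin n) → EuclideanSpace ℝ (Fin n)
  | 0, _, y => y
  | k + 1, is, y => reflAff A b (is (Fin.last k)) (applyAff A b k (fun j => is j.castSucc) y)

namespace Kac

variable {n : ℕ}

local notation "E" => EuclideanSpace ℝ (Fin n)

lemma row_apply (A : Matrix (Fin n) (Fin n) ℝ) (i j : Fin n) : row A i j = A i j := rfl

lemma inner_row (A : Matrix (Fin n) (Fin n) ℝ) (z : E) (i : Fin n) :
    ⟪z, row A i⟫ = A.mulVec (ofE z) i := by
  simp [PiLp.inner_apply, RCLike.inner_apply, row_apply, Matrix.mulVec, dotProduct,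
    ofE, mul_comm]

lemma norm_row_sq (A : Matrix (Fin n) (Fin n) ℝ) (i : Fin n) :
    ‖row A i‖ ^ 2 = ∑ j, (A i j) ^ 2 := by
  rw [← real_inner_self_eq_norm_sq]
  simp only [PiLp.inner_apply, RCLike.inner_apply, row_apply, conj_trivial]
  simp [sq]

lemma frobSq_eq (A : Matrix (Fin n) (Fin n) ℝ) : frobSq A = ∑ i, ‖row A i‖ ^ 2 := by
  simp [frobSq, norm_row_sq]

lemma row_ne_zero {A : Matrix (Fin n) (Fin n) ℝ} (hA : IsUnit A) (i : Fin n) :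
    row A i ≠ 0 := by
  intro h
  have hdet : A.det ≠ 0 := by
    have := hA.map (Matrix.detMonoidHom (n := Fin n) (R := ℝ))
    simpa [isUnit_iff_ne_zero] using this
  apply hdet
  apply Matrix.det_eq_zero_of_row_eq_zero i
  intro j
  have := congrFun (congrArg (fun v : E => (v : Fin n → ℝ)) h) j
  simpa [row_apply] using this

lemma norm_row_sq_pos {A : Matrix (Fin n) (Fin n) ℝ} (hA : IsUnit A) (i : Fin n) :
    0 < ‖row A i‖ ^ 2 := by
  have h := row_ne_zero hA i
  have : 0 < ‖row A i‖ := norm_pos_iff.mpr h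
  positivity

lemma frobSq_pos {A : Matrix (Fin n) (Fin n) ℝ} (hA : IsUnit A) (hn : 0 < n) :
    0 < frobSq A := by
  rw [frobSq_eq]
  have : (0 : ℝ) < ‖row A ⟨0, hn⟩‖ ^ 2 := norm_row_sq_pos hA _
  refine lt_of_lt_of_le this ?_
  exact Finset.single_le_sum (f := fun i => ‖row A i‖ ^ 2) (fun i _ => by positivity) (mem_univ _)

/-- probability of row i -/
noncomputable def p (A : Matrix (Fin n) (Fin n) ℝ) (i : Fin n) : ℝ := ‖row A i‖ ^ 2 / frobSq A

lemma p_nonneg (A : Matrix (Fin n) (Fin n) ℝ) (i : Fin n) : 0 ≤ p A i := by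
  unfold p
  have h := frobSq_eq A
  have : 0 ≤ frobSq A := by
    rw [h]; positivity
  positivity

lemma sum_p {A : Matrix (Fin n) (Fin n) ℝ} (hA : IsUnit A) (hn : 0 < n) :
    ∑ i, p A i = 1 := by
  unfold p
  rw [← Finset.sum_div, ← frobSq_eq, div_self (frobSq_pos hA hn).ne']


/-- the operator T z = ∑ i, ⟪z, a_i⟫ • a_i -/
noncomputable def Tlm (A : Matrix (Fin n) (Fin n) ℝ) : E →ₗ[ℝ] E :=
  ∑ i, LinearMap.smulRight (innerSL ℝ (row A i) : E →ₗ[ℝ] ℝ) (row A i)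

lemma Tlm_apply (A : Matrix (Fin n) (Fin n) ℝ) (z : E) :
    Tlm A z = ∑ i, ⟪row A i, z⟫ • row A i := by
  simp [Tlm, LinearMap.sum_apply]

/-- the averaged reflection operator M = I - (2/F) T -/
noncomputable def Mlm (A : Matrix (Fin n) (Fin n) ℝ) : E →ₗ[ℝ] E :=
  LinearMap.id - (2 / frobSq A) • Tlm A

lemma Mlm_apply (A : Matrix (Fin n) (Fin n) ℝ) (z : E) :
    Mlm A z = z - (2 / frobSq A) • Tlm A z := rfl

lemma inner_Tlm (A : Matrix (Fin n) (Fin n) ℝ) (u v : E) :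
    ⟪u, Tlm A v⟫ = ∑ i, ⟪row A i, u⟫ * ⟪row A i, v⟫ := by
  rw [Tlm_apply, inner_sum]
  refine Finset.sum_congr rfl fun i _ => ?_
  rw [real_inner_smul_right, real_inner_comm u]
  ring

lemma Tlm_symm (A : Matrix (Fin n) (Fin n) ℝ) (u v : E) :
    ⟪Tlm A u, v⟫ = ⟪u, Tlm A v⟫ := by
  rw [real_inner_comm, inner_Tlm, inner_Tlm]
  congr 1; ext i; ring

lemma Mlm_symm (A : Matrix (Fin n) (Fin n) ℝ) : (Mlm A).IsSymmetric := by
  intro u v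
  simp only [Mlm_apply]
  rw [inner_sub_left, inner_sub_right, real_inner_smul_left, real_inner_smul_right,
    Tlm_symm]

/-- averaged reflection is M -/
lemma avg_reflRow {A : Matrix (Fin n) (Fin n) ℝ} (hA : IsUnit A) (hn : 0 < n) (z : E) :
    ∑ i, p A i • reflRow A i z = Mlm A z := by
  unfold reflRow
  rw [Mlm_apply, Tlm_apply]
  have hF := (frobSq_pos hA hn).ne'
  have key : ∀ i : Fin n, p A i • (z - (2 * (⟪z, row A i⟫ / ‖row A i‖ ^ 2)) • row A i)
      = p A i • z - (2 / frobSq A) • (⟪row A i, z⟫ • row A i) := by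
    intro i
    rw [smul_sub, smul_smul, smul_smul]
    congr 2
    have h2 : ‖row A i‖ ^ 2 ≠ 0 := (norm_row_sq_pos hA i).ne'
    have h1 : ‖row A i‖ ≠ 0 := norm_ne_zero_iff.mpr (row_ne_zero hA i)
    rw [real_inner_comm z]
    unfold p
    field_simp
  simp_rw [key]
  rw [Finset.sum_sub_distrib, ← Finset.sum_smul, sum_p hA hn, one_smul, ← Finset.smul_sum]



lemma norm_toE_sq (w : Fin n → ℝ) : ‖toE w‖ ^ 2 = ∑ i, (w i) ^ 2 := by
  rw [← real_inner_self_eq_norm_sq]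
  simp only [PiLp.inner_apply, RCLike.inner_apply, toE, conj_trivial]
  simp [sq]

lemma inner_Tlm_self (A : Matrix (Fin n) (Fin n) ℝ) (z : E) :
    ⟪z, Tlm A z⟫ = ‖toE (A.mulVec (ofE z))‖ ^ 2 := by
  rw [inner_Tlm, norm_toE_sq]
  refine Finset.sum_congr rfl fun i _ => ?_
  rw [← inner_row, real_inner_comm, sq]

lemma inner_Tlm_self_le (A : Matrix (Fin n) (Fin n) ℝ) (z : E) :
    ⟪z, Tlm A z⟫ ≤ frobSq A * ‖z‖ ^ 2 := by
  rw [inner_Tlm, frobSq_eq A, Finset.sum_mul]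
  refine Finset.sum_le_sum fun i _ => ?_
  have h := abs_real_inner_le_norm (row A i) z
  calc ⟪row A i, z⟫ * ⟪row A i, z⟫ = |⟪row A i, z⟫| ^ 2 := by rw [sq_abs]; ring
  _ ≤ (‖row A i‖ * ‖z‖) ^ 2 := by
      apply sq_le_sq' <;> nlinarith [abs_nonneg ⟪row A i, z⟫, norm_nonneg (row A i), norm_nonneg z]
  _ = ‖row A i‖ ^ 2 * ‖z‖ ^ 2 := by ring

lemma inv_clm_apply {A : Matrix (Fin n) (Fin n) ℝ} (hA : IsUnit A) (z : E) :
    Matrix.toEuclideanCLM (𝕜 := ℝ) A⁻¹ (toE (A.mulVec (ofE z))) = z := by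
  have hdet : IsUnit A.det := (Matrix.isUnit_iff_isUnit_det A).mp hA
  have h1 : toE (A.mulVec (ofE z)) = Matrix.toEuclideanCLM (𝕜 := ℝ) A z := by
    rfl
  rw [h1, ← ContinuousLinearMap.comp_apply, ← ContinuousLinearMap.mul_def, ← map_mul,
    A.nonsing_inv_mul hdet]
  simp

lemma norm_le_opNorm_mul {A : Matrix (Fin n) (Fin n) ℝ} (hA : IsUnit A) (z : E) :
    ‖z‖ ≤ opNorm A⁻¹ * ‖toE (A.mulVec (ofE z))‖ := by
  conv_lhs => rw [← inv_clm_apply hA z]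
  exact (Matrix.toEuclideanCLM (𝕜 := ℝ) A⁻¹).le_opNorm _

lemma opNorm_inv_pos {A : Matrix (Fin n) (Fin n) ℝ} (hA : IsUnit A) (hn : 0 < n) :
    0 < opNorm A⁻¹ := by
  have : Nonempty (Fin n) := ⟨⟨0, hn⟩⟩
  have hz : (toE (Pi.single ⟨0, hn⟩ 1) : E) ≠ 0 := by
    intro h
    have := congrFun (congrArg (fun v : E => (v : Fin n → ℝ)) h) ⟨0, hn⟩
    simp [toE] at this
  set z : E := toE (Pi.single ⟨0, hn⟩ 1)
  have h := norm_le_opNorm_mul hA z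
  by_contra hle
  push_neg at hle
  have h0 : opNorm A⁻¹ = 0 := le_antisymm hle (norm_nonneg _)
  rw [h0, zero_mul] at h
  exact hz (norm_le_zero_iff.mp h)

lemma inner_Tlm_self_ge {A : Matrix (Fin n) (Fin n) ℝ} (hA : IsUnit A) (hn : 0 < n) (z : E) :
    ‖z‖ ^ 2 / opNorm A⁻¹ ^ 2 ≤ ⟪z, Tlm A z⟫ := by
  rw [inner_Tlm_self]
  have hop := opNorm_inv_pos hA hn
  rw [div_le_iff₀ (by positivity)]
  have h := norm_le_opNorm_mul hA z
  nlinarith [norm_nonneg z, norm_nonneg (toE (A.mulVec (ofE z))), opNorm_inv_pos hA hn]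

/-- the spectral gap -/
noncomputable def eps (A : Matrix (Fin n) (Fin n) ℝ) : ℝ := 2 / (frobSq A * opNorm A⁻¹ ^ 2)

lemma eps_pos {A : Matrix (Fin n) (Fin n) ℝ} (hA : IsUnit A) (hn : 0 < n) : 0 < eps A := by
  unfold eps
  have := frobSq_pos hA hn
  have := opNorm_inv_pos hA hn
  positivity

lemma inner_Mlm_le {A : Matrix (Fin n) (Fin n) ℝ} (hA : IsUnit A) (hn : 0 < n) (z : E) :
    ⟪z, Mlm A z⟫ ≤ (1 - eps A) * ‖z‖ ^ 2 := by
  rw [Mlm_apply, inner_sub_right, real_inner_smul_right, real_inner_self_eq_norm_sq]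
  have h := inner_Tlm_self_ge hA hn z
  have hF := frobSq_pos hA hn
  have hop := opNorm_inv_pos hA hn
  have : eps A * ‖z‖ ^ 2 ≤ 2 / frobSq A * ⟪z, Tlm A z⟫ := by
    rw [div_le_iff₀ (by positivity)] at h
    unfold eps
    rw [div_mul_eq_mul_div, div_mul_eq_mul_div,
      div_le_div_iff₀ (by positivity) (by positivity)]
    nlinarith
  linarith

lemma inner_Mlm_ge {A : Matrix (Fin n) (Fin n) ℝ} (hA : IsUnit A) (hn : 0 < n) (z : E) :
    -(‖z‖ ^ 2) ≤ ⟪z, Mlm A z⟫ := by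
  rw [Mlm_apply, inner_sub_right, real_inner_smul_right, real_inner_self_eq_norm_sq]
  have h := inner_Tlm_self_le A z
  have hF := frobSq_pos hA hn
  have : 2 / frobSq A * ⟪z, Tlm A z⟫ ≤ 2 * ‖z‖ ^ 2 := by
    rw [div_mul_eq_mul_div, div_le_iff₀ hF]
    nlinarith
  linarith


lemma geom_sum_Ico_le {lam ε : ℝ} (h1 : -1 ≤ lam) (h2 : lam ≤ 1 - ε) (hε : 0 < ε) (D : ℕ) :
    ∑ d ∈ Finset.Ico 1 D, lam ^ d ≤ 1 / ε := by
  rcases Nat.lt_or_ge D 1 with hD | hD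
  · interval_cases D
    simp
    positivity
  · have hlt : lam < 1 := by linarith
    have habs : |lam| ≤ 1 := abs_le.mpr ⟨h1, by linarith⟩
    have hpowabs : |lam ^ D| ≤ 1 := by
      rw [abs_pow]; exact pow_le_one₀ (abs_nonneg _) habs
    have hpowlo : -1 ≤ lam ^ D := neg_le_of_abs_le hpowabs
    have hid : (1 - lam) * ∑ d ∈ Finset.Ico 1 D, lam ^ d = lam - lam ^ D := by
      rw [Finset.sum_Ico_eq_sum_range]
      have : ∀ i ∈ Finset.range (D - 1), lam ^ (1 + i) = lam * lam ^ i := by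
        intro i _; rw [pow_add, pow_one]
      rw [Finset.sum_congr rfl this, ← Finset.mul_sum]
      have hg := geom_sum_mul lam (D - 1)
      have hd : lam * lam ^ (D - 1) = lam ^ D := by
        rw [← pow_succ']
        congr 1
        omega
      nlinarith [hg]
    have hnum : lam - lam ^ D ≤ 1 := by
      rcases le_or_gt lam 0 with h | h
      · linarith
      · have : 0 ≤ lam ^ D := le_of_lt (pow_pos h D)
        linarith
    have hS : ∑ d ∈ Finset.Ico 1 D, lam ^ d ≤ 1 / (1 - lam) := by
      rw [le_div_iff₀ (by linarith)]
      nlinarith [hid]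
    calc ∑ d ∈ Finset.Ico 1 D, lam ^ d ≤ 1 / (1 - lam) := hS
    _ ≤ 1 / ε := one_div_le_one_div_of_le hε (by linarith)

lemma sum_inner_pow_le {A : Matrix (Fin n) (Fin n) ℝ} (hA : IsUnit A) (hn : 0 < n)
    (z : E) (D : ℕ) :
    ∑ d ∈ Finset.Ico 1 D, ⟪z, ((Mlm A) ^ d) z⟫ ≤ (1 / eps A) * ‖z‖ ^ 2 := by
  have hsym : (Mlm A).IsSymmetric := Mlm_symm A
  have hfr : Module.finrank ℝ (EuclideanSpace ℝ (Fin n)) = n := finrank_euclideanSpace_fin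
  set bb := hsym.eigenvectorBasis hfr with hbb
  set μ := hsym.eigenvalues hfr with hμ
  have hb_unit : ∀ i, ‖bb i‖ = 1 := fun i => bb.orthonormal.1 i
  have happly : ∀ i, Mlm A (bb i) = μ i • bb i := by
    intro i
    exact hsym.apply_eigenvectorBasis hfr i
  have hpow : ∀ (d : ℕ) (i : Fin n), ((Mlm A) ^ d) (bb i) = (μ i ^ d) • bb i := by
    intro d i
    induction d with
    | zero => simp
    | succ d ih =>
      rw [pow_succ', Module.End.mul_apply, ih, map_smul, happly, smul_smul, ← pow_succ]
  have hμlo : ∀ i, -1 ≤ μ i := by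
    intro i
    have h := inner_Mlm_ge hA hn (bb i)
    rw [happly, real_inner_smul_right, real_inner_self_eq_norm_sq, hb_unit] at h
    simpa using h
  have hμhi : ∀ i, μ i ≤ 1 - eps A := by
    intro i
    have h := inner_Mlm_le hA hn (bb i)
    rw [happly, real_inner_smul_right, real_inner_self_eq_norm_sq, hb_unit] at h
    simpa using h
  have hdecomp : ∀ d : ℕ, ⟪z, ((Mlm A) ^ d) z⟫ = ∑ i, μ i ^ d * ⟪z, bb i⟫ ^ 2 := by
    intro d
    rw [← bb.sum_inner_mul_inner z (((Mlm A) ^ d) z)]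
    refine Finset.sum_congr rfl fun i _ => ?_
    have : ⟪bb i, ((Mlm A) ^ d) z⟫ = μ i ^ d * ⟪bb i, z⟫ := by
      rw [← (hsym.pow d) (bb i) z, hpow, real_inner_smul_left]
    rw [this, real_inner_comm (bb i) z]
    ring
  have hpars : ∑ i, ⟪z, bb i⟫ ^ 2 = ‖z‖ ^ 2 := by
    have := bb.sum_inner_mul_inner z z
    rw [← real_inner_self_eq_norm_sq, ← this]
    refine Finset.sum_congr rfl fun i _ => ?_
    rw [real_inner_comm (bb i) z]
    ring
  calc ∑ d ∈ Finset.Ico 1 D, ⟪z, ((Mlm A) ^ d) z⟫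
      = ∑ i, (∑ d ∈ Finset.Ico 1 D, μ i ^ d) * ⟪z, bb i⟫ ^ 2 := by
        simp_rw [hdecomp]
        rw [Finset.sum_comm]
        exact Finset.sum_congr rfl fun i _ => (Finset.sum_mul _ _ _).symm
    _ ≤ ∑ i, (1 / eps A) * ⟪z, bb i⟫ ^ 2 := by
        refine Finset.sum_le_sum fun i _ => ?_
        have := geom_sum_Ico_le (hμlo i) (hμhi i) (eps_pos hA hn) D
        nlinarith [sq_nonneg ⟪z, bb i⟫]
    _ = (1 / eps A) * ‖z‖ ^ 2 := by rw [← Finset.mul_sum, hpars]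


lemma norm_reflRow {A : Matrix (Fin n) (Fin n) ℝ} (hA : IsUnit A) (i : Fin n) (z : E) :
    ‖reflRow A i z‖ = ‖z‖ := by
  have hs : ‖row A i‖ ^ 2 ≠ 0 := (norm_row_sq_pos hA i).ne'
  have h1 : ‖reflRow A i z‖ ^ 2 = ‖z‖ ^ 2 := by
    unfold reflRow
    rw [norm_sub_sq_real, real_inner_smul_right, norm_smul, mul_pow, Real.norm_eq_abs, sq_abs]
    field_simp
    ring
  calc ‖reflRow A i z‖ = Real.sqrt (‖reflRow A i z‖ ^ 2) := (Real.sqrt_sq (norm_nonneg _)).symm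
  _ = Real.sqrt (‖z‖ ^ 2) := by rw [h1]
  _ = ‖z‖ := Real.sqrt_sq (norm_nonneg _)

lemma norm_applySeq {A : Matrix (Fin n) (Fin n) ℝ} (hA : IsUnit A) :
    ∀ (k : ℕ) (is : Fin k → Fin n) (z : E), ‖applySeq A k is z‖ = ‖z‖
  | 0, _, _ => rfl
  | k + 1, is, z => by
    rw [applySeq, norm_reflRow hA, norm_applySeq hA k]

lemma sub_reflAff {A : Matrix (Fin n) (Fin n) ℝ} {b : Fin n → ℝ} {x : E}
    (hb : ∀ i, b i = ⟪x, row A i⟫) (i : Fin n) (y : E) :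
    x - reflAff A b i y = reflRow A i (x - y) := by
  unfold reflAff reflRow
  rw [hb i, inner_sub_left]
  module

lemma sub_applyAff {A : Matrix (Fin n) (Fin n) ℝ} {b : Fin n → ℝ} {x : E}
    (hb : ∀ i, b i = ⟪x, row A i⟫) :
    ∀ (k : ℕ) (is : Fin k → Fin n) (y : E),
      x - applyAff A b k is y = applySeq A k is (x - y)
  | 0, _, _ => rfl
  | k + 1, is, y => by
    rw [applyAff, applySeq, ← sub_applyAff hb k, sub_reflAff hb]

/-- product weight -/
noncomputable def W (A : Matrix (Fin n) (Fin n) ℝ) (N : ℕ) (is : Fin N → Fin n) : ℝ :=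
  ∏ j, p A (is j)

lemma W_nonneg (A : Matrix (Fin n) (Fin n) ℝ) (N : ℕ) (is : Fin N → Fin n) : 0 ≤ W A N is :=
  Finset.prod_nonneg fun j _ => p_nonneg A (is j)

lemma sum_succ_eq {N : ℕ} (g : (Fin (N + 1) → Fin n) → ℝ) :
    ∑ is : Fin (N + 1) → Fin n, g is
      = ∑ is' : Fin N → Fin n, ∑ i : Fin n, g (Fin.snoc is' i) := by
  rw [← (Fin.snocEquiv (fun _ => Fin n)).sum_comp g]
  rw [Fintype.sum_prod_type, Finset.sum_comm]
  rfl

lemma snoc_castLE {N k : ℕ} (h : k ≤ N) (is' : Fin N → Fin n) (i : Fin n) (j : Fin k) :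
    (Fin.snoc is' i : Fin (N + 1) → Fin n) (Fin.castLE (Nat.le_succ_of_le h) j)
      = is' (Fin.castLE h j) := by
  have : Fin.castLE (Nat.le_succ_of_le h) j = Fin.castSucc (Fin.castLE h j) := Fin.ext rfl
  rw [this, Fin.snoc_castSucc]

lemma W_snoc (A : Matrix (Fin n) (Fin n) ℝ) (N : ℕ) (is' : Fin N → Fin n) (i : Fin n) :
    W A (N + 1) (Fin.snoc is' i) = W A N is' * p A i := by
  unfold W
  rw [Fin.prod_univ_castSucc]
  simp [Fin.snoc_castSucc, Fin.snoc_last]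

lemma applySeq_snoc (A : Matrix (Fin n) (Fin n) ℝ) (N : ℕ) (is' : Fin N → Fin n) (i : Fin n)
    (z : E) :
    applySeq A (N + 1) (Fin.snoc is' i) z = reflRow A i (applySeq A N is' z) := by
  rw [applySeq]
  have h1 : (Fin.snoc is' i : Fin (N + 1) → Fin n) (Fin.last N) = i := Fin.snoc_last _ _
  have h2 : (fun j : Fin N => (Fin.snoc is' i : Fin (N + 1) → Fin n) j.castSucc) = is' := by
    funext j; exact Fin.snoc_castSucc _ _ _
  rw [h1, h2]

lemma sum_W {A : Matrix (Fin n) (Fin n) ℝ} (hA : IsUnit A) (hn : 0 < n) :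
    ∀ N : ℕ, ∑ is : Fin N → Fin n, W A N is = 1
  | 0 => by simp [W]
  | N + 1 => by
    rw [sum_succ_eq]
    have : ∀ is' : Fin N → Fin n, ∑ i : Fin n, W A (N + 1) (Fin.snoc is' i)
        = W A N is' := by
      intro is'
      simp_rw [W_snoc]
      rw [← Finset.mul_sum, sum_p hA hn, mul_one]
    simp_rw [this]
    exact sum_W hA hn N

lemma tower {A : Matrix (Fin n) (Fin n) ℝ} (hA : IsUnit A) (hn : 0 < n) (k : ℕ) (z : E) :
    ∀ (d : ℕ) (U : (Fin k → Fin n) → E),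
      ∑ is : Fin (k + d) → Fin n, W A (k + d) is *
          ⟪U (fun j => is (Fin.castLE (Nat.le_add_right k d) j)), applySeq A (k + d) is z⟫
      = ∑ is : Fin k → Fin n, W A k is * ⟪U is, ((Mlm A) ^ d) (applySeq A k is z)⟫
  | 0, U => by
    refine Finset.sum_congr rfl fun is _ => ?_
    have h1 : (fun j : Fin k => is (Fin.castLE (Nat.le_add_right k 0) j)) = is := by
      funext j; exact congrArg is (Fin.ext rfl)
    rw [h1, pow_zero, Module.End.one_apply]
    rfl
  | d + 1, U => by
    refine Eq.trans (sum_succ_eq _) ?_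
    have step : ∀ is' : Fin (k + d) → Fin n,
        ∑ i : Fin n, W A (k + d + 1) (Fin.snoc is' i) *
          ⟪U (fun j => (Fin.snoc is' i : Fin (k + d + 1) → Fin n) (Fin.castLE (Nat.le_add_right k (d + 1)) j)),
            applySeq A (k + d + 1) (Fin.snoc is' i) z⟫
        = W A (k + d) is' *
          ⟪Mlm A (U (fun j => is' (Fin.castLE (Nat.le_add_right k d) j))),
            applySeq A (k + d) is' z⟫ := by
      intro is'
      have hrestr : ∀ i : Fin n,
          (fun j => (Fin.snoc is' i : Fin (k + d + 1) → Fin n) (Fin.castLE (Nat.le_add_right k (d + 1)) j))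
            = fun j => is' (Fin.castLE (Nat.le_add_right k d) j) := by
        intro i
        funext j
        exact snoc_castLE (Nat.le_add_right k d) is' i j
      simp_rw [W_snoc, applySeq_snoc, hrestr]
      set u := U fun j => is' (Fin.castLE (Nat.le_add_right k d) j)
      set y := applySeq A (k + d) is' z
      calc ∑ i : Fin n, W A (k + d) is' * p A i * ⟪u, reflRow A i y⟫
          = W A (k + d) is' * ∑ i : Fin n, ⟪u, p A i • reflRow A i y⟫ := by
            rw [Finset.mul_sum]
            refine Finset.sum_congr rfl fun i _ => ?_
            rw [real_inner_smul_right]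
            ring
      _ = W A (k + d) is' * ⟪u, Mlm A y⟫ := by rw [← inner_sum, avg_reflRow hA hn]
      _ = W A (k + d) is' * ⟪Mlm A u, y⟫ := by rw [Mlm_symm A u y]
    refine Eq.trans (Finset.sum_congr rfl fun is' _ => step is') ?_
    refine Eq.trans (tower hA hn k z d (fun is => Mlm A (U is))) ?_
    refine Finset.sum_congr rfl fun is _ => ?_
    rw [Mlm_symm A]
    congr 1
    rw [pow_succ', Module.End.mul_apply]

lemma restrict_sum {A : Matrix (Fin n) (Fin n) ℝ} (hA : IsUnit A) (hn : 0 < n) (l : ℕ)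
    (g : (Fin l → Fin n) → ℝ) :
    ∀ d : ℕ,
      ∑ is : Fin (l + d) → Fin n, W A (l + d) is *
          g (fun j => is (Fin.castLE (Nat.le_add_right l d) j))
      = ∑ is : Fin l → Fin n, W A l is * g is
  | 0 => by
    refine Finset.sum_congr rfl fun is _ => ?_
    have h1 : (fun j : Fin l => is (Fin.castLE (Nat.le_add_right l 0) j)) = is := by
      funext j; exact congrArg is (Fin.ext rfl)
    rw [h1]
    rfl
  | d + 1 => by
    refine Eq.trans (sum_succ_eq _) ?_
    have step : ∀ is' : Fin (l + d) → Fin n,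
        ∑ i : Fin n, W A (l + d + 1) (Fin.snoc is' i) *
          g (fun j => (Fin.snoc is' i : Fin (l + d + 1) → Fin n) (Fin.castLE (Nat.le_add_right l (d + 1)) j))
        = W A (l + d) is' * g (fun j => is' (Fin.castLE (Nat.le_add_right l d) j)) := by
      intro is'
      have hrestr : ∀ i : Fin n,
          (fun j => (Fin.snoc is' i : Fin (l + d + 1) → Fin n) (Fin.castLE (Nat.le_add_right l (d + 1)) j))
            = fun j => is' (Fin.castLE (Nat.le_add_right l d) j) := by
        intro i
        funext j
        exact snoc_castLE (Nat.le_add_right l d) is' i j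
      simp_rw [W_snoc, hrestr]
      rw [← Finset.sum_mul, ← Finset.mul_sum, sum_p hA hn, mul_one]
    refine Eq.trans (Finset.sum_congr rfl fun is' _ => step is') ?_
    exact restrict_sum hA hn l g d


lemma cross_eq {A : Matrix (Fin n) (Fin n) ℝ} (hA : IsUnit A) (hn : 0 < n) (z : E)
    (k l N : ℕ) (hkl : k ≤ l) (hlN : l ≤ N) :
    ∑ is : Fin N → Fin n, W A N is *
        ⟪applySeq A k (fun j => is (Fin.castLE (hkl.trans hlN) j)) z,
          applySeq A l (fun j => is (Fin.castLE hlN j)) z⟫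
      = ∑ is : Fin k → Fin n, W A k is *
          ⟪applySeq A k is z, ((Mlm A) ^ (l - k)) (applySeq A k is z)⟫ := by
  obtain ⟨e, rfl⟩ := Nat.exists_eq_add_of_le hlN
  obtain ⟨d, rfl⟩ := Nat.exists_eq_add_of_le hkl
  have hd : k + d - k = d := by omega
  rw [hd]
  have h1 := restrict_sum hA hn (k + d)
    (fun is => ⟪applySeq A k (fun j => is (Fin.castLE (Nat.le_add_right k d) j)) z,
      applySeq A (k + d) is z⟫) e
  have h2 := tower hA hn k z d (fun is => applySeq A k is z)
  exact h1.trans h2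

lemma cross_diag {A : Matrix (Fin n) (Fin n) ℝ} (hA : IsUnit A) (hn : 0 < n) (z : E) (k : ℕ) :
    ∑ is : Fin k → Fin n, W A k is *
        ⟪applySeq A k is z, ((Mlm A) ^ 0) (applySeq A k is z)⟫ = ‖z‖ ^ 2 := by
  have : ∀ is : Fin k → Fin n,
      ⟪applySeq A k is z, ((Mlm A) ^ 0) (applySeq A k is z)⟫ = ‖z‖ ^ 2 := by
    intro is
    rw [pow_zero, Module.End.one_apply, real_inner_self_eq_norm_sq, norm_applySeq hA]
  simp_rw [this]
  rw [← Finset.sum_mul, sum_W hA hn, one_mul]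

lemma cross_offdiag_le {A : Matrix (Fin n) (Fin n) ℝ} (hA : IsUnit A) (hn : 0 < n) (z : E)
    (k : ℕ) (D : ℕ) :
    ∑ is : Fin k → Fin n, W A k is *
        (∑ d ∈ Finset.Ico 1 D, ⟪applySeq A k is z, ((Mlm A) ^ d) (applySeq A k is z)⟫)
      ≤ (1 / eps A) * ‖z‖ ^ 2 := by
  have hb : ∀ is : Fin k → Fin n,
      ∑ d ∈ Finset.Ico 1 D, ⟪applySeq A k is z, ((Mlm A) ^ d) (applySeq A k is z)⟫
        ≤ (1 / eps A) * ‖z‖ ^ 2 := by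
    intro is
    have := sum_inner_pow_le hA hn (applySeq A k is z) D
    rwa [norm_applySeq hA] at this
  calc ∑ is : Fin k → Fin n, W A k is *
        (∑ d ∈ Finset.Ico 1 D, ⟪applySeq A k is z, ((Mlm A) ^ d) (applySeq A k is z)⟫)
      ≤ ∑ is : Fin k → Fin n, W A k is * ((1 / eps A) * ‖z‖ ^ 2) := by
        refine Finset.sum_le_sum fun is _ => ?_
        exact mul_le_mul_of_nonneg_left (hb is) (W_nonneg A k is)
    _ = (1 / eps A) * ‖z‖ ^ 2 := by rw [← Finset.sum_mul, sum_W hA hn, one_mul]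


lemma fin_filter_sum {m : ℕ} (k : Fin m) (f : ℕ → ℝ) :
    ∑ l ∈ Finset.univ.filter (fun l : Fin m => k < l), f (l.val - k.val)
      = ∑ d ∈ Finset.Ico 1 (m - k.val), f d := by
  refine Finset.sum_bij' (i := fun l _ => l.val - k.val)
    (j := fun d hd => ⟨k.val + d, by
      simp only [Finset.mem_Ico] at hd
      omega⟩) ?_ ?_ ?_ ?_ ?_
  · intro l hl
    simp only [Finset.mem_filter, Finset.mem_univ, true_and, Fin.lt_def] at hl
    simp only [Finset.mem_Ico]
    have := l.isLt
    omega
  · intro d hd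
    simp only [Finset.mem_Ico] at hd
    simp only [Finset.mem_filter, Finset.mem_univ, true_and, Fin.lt_def]
    omega
  · intro l hl
    simp only [Finset.mem_filter, Finset.mem_univ, true_and, Fin.lt_def] at hl
    apply Fin.ext
    simp only
    omega
  · intro d hd
    simp only [Finset.mem_Ico] at hd
    simp only
    omega
  · intro l hl
    rfl

end Kac


/-- Theorem 1: `E‖x − (1/m)·Σ_{k=1}^m x_k‖ ≤ ((1 + ‖A‖_F·‖A⁻¹‖)/√m)·‖x − x₁‖`, where
`x` solves `Ax = b`, `x_{k+1}` is the reflection of `x_k` through the hyperplane of the random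
row `a_{i_k}` (i.e. `x_k = applyAff A b (k−1)` along the first `k−1` indices), and the
expectation is the weighted sum over all index sequences `(i₁,…,i_{m−1}) ∈ {1,…,n}^{m−1}`. -/
theorem expected_distance_average_le {n : ℕ} (hn : 2 ≤ n) (A : Matrix (Fin n) (Fin n) ℝ)
    (hA : IsUnit A) (b : Fin n → ℝ) (x : EuclideanSpace ℝ (Fin n))
    (hx : A.mulVec (ofE x) = b) (x₁ : EuclideanSpace ℝ (Fin n)) (m : ℕ) (hm : 1 ≤ m) :
    ∑ is : Fin (m - 1) → Fin n, (∏ j, ‖row A (is j)‖ ^ 2 / frobSq A) *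
        ‖x - (1 / (m : ℝ)) • ∑ k : Fin m,
            applyAff A b k.val (fun j => is (Fin.castLE (by have := k.isLt; omega) j)) x₁‖
      ≤ ((1 + Real.sqrt (frobSq A) * opNorm A⁻¹) / Real.sqrt m) * ‖x - x₁‖ := by
  classical
  have hn0 : 0 < n := by omega
  have hm0 : (0 : ℝ) < m := by exact_mod_cast hm
  have hmne : (m : ℝ) ≠ 0 := hm0.ne'
  set N := m - 1 with hN
  set z : EuclideanSpace ℝ (Fin n) := x - x₁ with hz
  set K := Real.sqrt (frobSq A) * opNorm A⁻¹ with hK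
  have hkN : ∀ k : Fin m, (k : ℕ) ≤ N := fun k => by have := k.isLt; omega
  have hbrow : ∀ i, b i = ⟪x, row A i⟫ := fun i => by
    rw [← hx]; exact (Kac.inner_row A x i).symm
  set u : (Fin N → Fin n) → Fin m → EuclideanSpace ℝ (Fin n) :=
    fun is k => applySeq A k.val (fun j => is (Fin.castLE (hkN k) j)) z with hu
  set v : (Fin N → Fin n) → EuclideanSpace ℝ (Fin n) := fun is => ∑ k : Fin m, u is k with hv
  -- Stage 1: rewrite the LHS
  have stage1 : ∑ is : Fin N → Fin n, (∏ j, ‖row A (is j)‖ ^ 2 / frobSq A) *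
        ‖x - (1 / (m : ℝ)) • ∑ k : Fin m,
            applyAff A b k.val (fun j => is (Fin.castLE (by have := k.isLt; omega) j)) x₁‖
      = (1 / (m : ℝ)) * ∑ is : Fin N → Fin n, Kac.W A N is * ‖v is‖ := by
    rw [Finset.mul_sum]
    refine Finset.sum_congr rfl fun is _ => ?_
    have h2 : x - (1 / (m : ℝ)) • ∑ k : Fin m,
        applyAff A b k.val (fun j => is (Fin.castLE (by have := k.isLt; omega) j)) x₁
        = (1 / (m : ℝ)) • v is := by
      have hsum : v is = ∑ k : Fin m,
          (x - applyAff A b k.val (fun j => is (Fin.castLE (by have := k.isLt; omega) j)) x₁) := by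
        refine Finset.sum_congr rfl fun k _ => ?_
        exact (Kac.sub_applyAff hbrow k.val _ x₁).symm
      rw [hsum, Finset.sum_sub_distrib, smul_sub, Finset.sum_const, Finset.card_univ,
        Fintype.card_fin, ← Nat.cast_smul_eq_nsmul ℝ, smul_smul,
        one_div_mul_cancel hmne, one_smul]
    rw [h2, norm_smul, Real.norm_eq_abs, abs_of_pos (by positivity),
      show (∏ j, ‖row A (is j)‖ ^ 2 / frobSq A) = Kac.W A N is from rfl]
    ring
  rw [stage1]
  -- Cauchy-Schwarz
  have hS1nonneg : 0 ≤ ∑ is : Fin N → Fin n, Kac.W A N is * ‖v is‖ :=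
    Finset.sum_nonneg fun is _ => mul_nonneg (Kac.W_nonneg A N is) (norm_nonneg _)
  have hcs : (∑ is : Fin N → Fin n, Kac.W A N is * ‖v is‖) ^ 2
      ≤ ∑ is : Fin N → Fin n, Kac.W A N is * ‖v is‖ ^ 2 := by
    have h := Finset.sum_mul_sq_le_sq_mul_sq Finset.univ
      (fun is : Fin N → Fin n => Real.sqrt (Kac.W A N is))
      (fun is => Real.sqrt (Kac.W A N is) * ‖v is‖)
    have h1 : ∀ is : Fin N → Fin n,
        Real.sqrt (Kac.W A N is) * (Real.sqrt (Kac.W A N is) * ‖v is‖)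
          = Kac.W A N is * ‖v is‖ := fun is => by
      rw [← mul_assoc, Real.mul_self_sqrt (Kac.W_nonneg A N is)]
    have h2 : ∀ is : Fin N → Fin n, Real.sqrt (Kac.W A N is) ^ 2 = Kac.W A N is :=
      fun is => Real.sq_sqrt (Kac.W_nonneg A N is)
    have h3 : ∀ is : Fin N → Fin n, (Real.sqrt (Kac.W A N is) * ‖v is‖) ^ 2
        = Kac.W A N is * ‖v is‖ ^ 2 := fun is => by rw [mul_pow, h2]
    simp_rw [h1, h2, h3] at h
    rwa [Kac.sum_W hA hn0 N, one_mul] at h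
  -- the correlation sums
  set c : Fin m → Fin m → ℝ := fun k l =>
    ∑ is : Fin N → Fin n, Kac.W A N is * ⟪u is k, u is l⟫ with hc
  have hQeq : ∑ is : Fin N → Fin n, Kac.W A N is * ‖v is‖ ^ 2
      = ∑ k : Fin m, ∑ l : Fin m, c k l := by
    have hv2 : ∀ is : Fin N → Fin n, Kac.W A N is * ‖v is‖ ^ 2
        = ∑ k : Fin m, ∑ l : Fin m, Kac.W A N is * ⟪u is k, u is l⟫ := by
      intro is
      rw [← real_inner_self_eq_norm_sq, hv]
      simp only
      rw [sum_inner, Finset.mul_sum]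
      refine Finset.sum_congr rfl fun k _ => ?_
      rw [inner_sum, Finset.mul_sum]
    simp_rw [hv2]
    rw [Finset.sum_comm]
    refine Finset.sum_congr rfl fun k _ => ?_
    rw [Finset.sum_comm]
  have hdiag : ∀ k : Fin m, c k k = ‖z‖ ^ 2 := by
    intro k
    have h1 : c k k = ∑ is : Fin k.val → Fin n, Kac.W A k.val is *
        ⟪applySeq A k.val is z, ((Kac.Mlm A) ^ (k.val - k.val)) (applySeq A k.val is z)⟫ :=
      Kac.cross_eq hA hn0 z k.val k.val N le_rfl (hkN k)
    rw [h1, Nat.sub_self, Kac.cross_diag hA hn0]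
  have hsym : ∀ k l : Fin m, c k l = c l k := by
    intro k l
    simp only [hc]
    refine Finset.sum_congr rfl fun is _ => ?_
    rw [real_inner_comm]
  have hoff : ∀ k : Fin m, (∑ l ∈ Finset.univ.filter (fun l => k < l), c k l)
      ≤ (1 / Kac.eps A) * ‖z‖ ^ 2 := by
    intro k
    have h1 : ∀ l ∈ Finset.univ.filter (fun l : Fin m => k < l),
        c k l = ∑ is : Fin k.val → Fin n, Kac.W A k.val is *
          ⟪applySeq A k.val is z, ((Kac.Mlm A) ^ (l.val - k.val)) (applySeq A k.val is z)⟫ := by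
      intro l hl
      have hkl : (k : ℕ) ≤ l := le_of_lt ((Finset.mem_filter.mp hl).2)
      exact Kac.cross_eq hA hn0 z k.val l.val N hkl (hkN l)
    rw [Finset.sum_congr rfl h1, Finset.sum_comm]
    have h2 : ∀ is : Fin k.val → Fin n,
        ∑ l ∈ Finset.univ.filter (fun l : Fin m => k < l),
          Kac.W A k.val is *
            ⟪applySeq A k.val is z, ((Kac.Mlm A) ^ (l.val - k.val)) (applySeq A k.val is z)⟫
        = Kac.W A k.val is * ∑ d ∈ Finset.Ico 1 (m - k.val),
            ⟪applySeq A k.val is z, ((Kac.Mlm A) ^ d) (applySeq A k.val is z)⟫ := by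
      intro is
      rw [← Finset.mul_sum]
      congr 1
      exact Kac.fin_filter_sum k
        (fun d => ⟪applySeq A k.val is z, ((Kac.Mlm A) ^ d) (applySeq A k.val is z)⟫)
    rw [Finset.sum_congr rfl (fun is _ => h2 is)]
    exact Kac.cross_offdiag_le hA hn0 z k.val (m - k.val)
  have hsplit : ∑ k : Fin m, ∑ l : Fin m, c k l
      = (∑ k : Fin m, c k k)
        + 2 * ∑ k : Fin m, ∑ l ∈ Finset.univ.filter (fun l => k < l), c k l := by
    have h1 : ∀ k : Fin m, ∑ l : Fin m, c k l
        = c k k + (∑ l ∈ Finset.univ.filter (fun l => k < l), c k l)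
          + ∑ l ∈ Finset.univ.filter (fun l => l < k), c k l := by
      intro k
      rw [← Finset.sum_filter_add_sum_filter_not Finset.univ (fun l => k < l) (c k)]
      have h2 : Finset.univ.filter (fun l : Fin m => ¬ k < l)
          = insert k (Finset.univ.filter (fun l : Fin m => l < k)) := by
        ext l
        simp only [Finset.mem_filter, Finset.mem_univ, true_and, Finset.mem_insert, not_lt]
        constructor
        · intro hle
          rcases eq_or_lt_of_le hle with h | h
          · exact Or.inl h
          · exact Or.inr h
        · rintro (rfl | h)
          · exact le_refl _
          · exact le_of_lt h
      rw [h2, Finset.sum_insert (by simp)]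
      ring
    have h3 : ∑ k : Fin m, ∑ l ∈ Finset.univ.filter (fun l => l < k), c k l
        = ∑ k : Fin m, ∑ l ∈ Finset.univ.filter (fun l => k < l), c k l := by
      rw [Finset.sum_comm' (s := Finset.univ) (t := fun k : Fin m => Finset.univ.filter (fun l => l < k))
        (t' := Finset.univ) (s' := fun l : Fin m => Finset.univ.filter (fun k => l < k)) (by
        intro a b
        simp only [Finset.mem_filter, Finset.mem_univ, true_and, and_true])]
      refine Finset.sum_congr rfl fun l _ => Finset.sum_congr rfl fun k _ => hsym k l
    simp_rw [h1]
    rw [Finset.sum_add_distrib, Finset.sum_add_distrib, h3]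
    ring
  -- numeric facts
  have hF := Kac.frobSq_pos hA hn0
  have hop := Kac.opNorm_inv_pos hA hn0
  have hKnn : 0 ≤ K := by positivity
  have hepsinv : 1 / Kac.eps A = frobSq A * opNorm A⁻¹ ^ 2 / 2 := by
    rw [Kac.eps, one_div_div]
  have hK2 : K ^ 2 = frobSq A * opNorm A⁻¹ ^ 2 := by
    rw [hK, mul_pow, Real.sq_sqrt hF.le]
  have hdsum : ∑ k : Fin m, c k k = (m : ℝ) * ‖z‖ ^ 2 := by
    rw [Finset.sum_congr rfl (fun k _ => hdiag k), Finset.sum_const, Finset.card_univ,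
      Fintype.card_fin, nsmul_eq_mul]
  have hosum : ∑ k : Fin m, ∑ l ∈ Finset.univ.filter (fun l => k < l), c k l
      ≤ (m : ℝ) * ((1 / Kac.eps A) * ‖z‖ ^ 2) := by
    calc ∑ k : Fin m, ∑ l ∈ Finset.univ.filter (fun l => k < l), c k l
        ≤ ∑ _k : Fin m, (1 / Kac.eps A) * ‖z‖ ^ 2 := Finset.sum_le_sum fun k _ => hoff k
      _ = (m : ℝ) * ((1 / Kac.eps A) * ‖z‖ ^ 2) := by
          rw [Finset.sum_const, Finset.card_univ, Fintype.card_fin, nsmul_eq_mul]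
  have hQle : ∑ is : Fin N → Fin n, Kac.W A N is * ‖v is‖ ^ 2
      ≤ (m : ℝ) * (1 + K) ^ 2 * ‖z‖ ^ 2 := by
    rw [hQeq, hsplit]
    have : (m : ℝ) * ‖z‖ ^ 2 + 2 * ((m : ℝ) * ((1 / Kac.eps A) * ‖z‖ ^ 2))
        ≤ (m : ℝ) * (1 + K) ^ 2 * ‖z‖ ^ 2 := by
      rw [hepsinv, ← hK2]
      nlinarith [sq_nonneg ‖z‖, hm0, hKnn, mul_nonneg (mul_nonneg hm0.le hKnn) (sq_nonneg ‖z‖)]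
    linarith [hdsum, hosum]
  -- finish
  have hS1 : ∑ is : Fin N → Fin n, Kac.W A N is * ‖v is‖
      ≤ Real.sqrt ((m : ℝ) * (1 + K) ^ 2 * ‖z‖ ^ 2) := by
    have h1 : ∑ is : Fin N → Fin n, Kac.W A N is * ‖v is‖
        ≤ Real.sqrt (∑ is : Fin N → Fin n, Kac.W A N is * ‖v is‖ ^ 2) :=
      (Real.le_sqrt hS1nonneg (Finset.sum_nonneg fun is _ =>
        mul_nonneg (Kac.W_nonneg A N is) (sq_nonneg _))).mpr hcs
    exact h1.trans (Real.sqrt_le_sqrt hQle)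
  have hfin : Real.sqrt ((m : ℝ) * (1 + K) ^ 2 * ‖z‖ ^ 2)
      = Real.sqrt m * ((1 + K) * ‖z‖) := by
    rw [show (m : ℝ) * (1 + K) ^ 2 * ‖z‖ ^ 2 = ((1 + K) * ‖z‖) ^ 2 * m by ring,
      Real.sqrt_mul (by positivity), Real.sqrt_sq (by positivity)]
    ring
  have hsqm : (0 : ℝ) < Real.sqrt m := Real.sqrt_pos.mpr hm0
  calc (1 / (m : ℝ)) * ∑ is : Fin N → Fin n, Kac.W A N is * ‖v is‖
      ≤ (1 / (m : ℝ)) * (Real.sqrt m * ((1 + K) * ‖z‖)) := by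
        refine mul_le_mul_of_nonneg_left ?_ (by positivity)
        rw [← hfin]
        exact hS1
    _ = ((1 + K) / Real.sqrt m) * ‖z‖ := by
        have hsq : Real.sqrt m * Real.sqrt m = (m : ℝ) := Real.mul_self_sqrt hm0.le
        field_simp
        linear_combination ‖z‖ * hsq
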